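/- For each fixed n, the coefficient of x^k in H_n(x;c) is a polynomial in c of degree at most ⌊(n−k)/2⌋, and the coefficient of x^{n−2j} in (−1)^j H_n(x;c), viewed as a polynomial in c, has nonnegative leading coefficient. -/

import Mathlib

open Finset Polynomial

attribute [local instance] Classical.propDecidable

/-- The associated Hermite polynomial regarded in `ℝ[c][x]`: the outer variable
is `x`, the inner polynomial variable is `c`. -/
noncomputable def aHC : ℕ → Polynomial (Polynomial ℝ)
  | 0 => 1
  | 1 => Polynomial.X
  | n + 2 =>
      Polynomial.X * aHC (n + 1) -
        Polynomial.C (Polynomial.C (n : ℝ) + Polynomial.X) * aHC n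

/-!
Write `a(n,k) ∈ ℝ[c]` for the coefficient of `x^k` in `H_n`. The recurrence reads
`a(n+2,k+1) = a(n+1,k) - (c+n) a(n,k+1)` and `a(n+2,0) = -(c+n) a(n,0)`: the `c`-degree only
grows through the factor `c+n`, which comes with a drop of `n - k` by two, hence the degree bound.
For signs, `b(k,j) := (-1)^j a(k+2j,k)` (`signedCoeffAHC k j`) satisfies `b(k,0) = 1`, `b(0,j+1) = (c+2j) b(0,j)` and
`b(k+1,j+1) = b(k,j+1) + (c+k+1+2j) b(k+1,j)`, a recurrence with nonnegative coefficients,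
so every `b(k,j)` has nonnegative coefficients, in particular a nonnegative leading one.
-/

namespace Polynomial

variable (R : Type*) [Semiring R] [PartialOrder R] [IsOrderedRing R]

def nonnegCoeffs : Subsemiring R[X] where
  carrier := {p | ∀ i, 0 ≤ p.coeff i}
  zero_mem' i := by simp
  one_mem' i := by rw [coeff_one]; split_ifs <;> simp
  add_mem' hp hq i := by rw [coeff_add]; exact add_nonneg (hp i) (hq i)
  mul_mem' {p q} hp hq i := by
    rw [coeff_mul]
    exact Finset.sum_nonneg fun x _ => mul_nonneg (hp x.1) (hq x.2)

variable {R}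

theorem C_add_X_mem_nonnegCoeffs {r : R} (hr : 0 ≤ r) : C r + X ∈ nonnegCoeffs R := by
  refine add_mem (fun i => ?_) (fun i => ?_)
  · rw [coeff_C]; split_ifs <;> simp [hr]
  · rw [coeff_X]; split_ifs <;> simp

theorem leadingCoeff_nonneg_of_mem_nonnegCoeffs {p : R[X]} (hp : p ∈ nonnegCoeffs R) :
    0 ≤ p.leadingCoeff :=
  hp _

end Polynomial

theorem aHC_add_two (n : ℕ) : aHC (n + 2) = X * aHC (n + 1) - C (C (n : ℝ) + X) * aHC n := rfl

theorem coeff_aHC_add_two_zero (n : ℕ) :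
    (aHC (n + 2)).coeff 0 = -((C (n : ℝ) + X) * (aHC n).coeff 0) := by
  rw [aHC_add_two, coeff_sub, coeff_C_mul, mul_coeff_zero, coeff_X_zero, zero_mul, zero_sub]

theorem coeff_aHC_add_two_succ (n k : ℕ) :
    (aHC (n + 2)).coeff (k + 1) =
      (aHC (n + 1)).coeff k - (C (n : ℝ) + X) * (aHC n).coeff (k + 1) := by
  rw [aHC_add_two, coeff_sub, coeff_C_mul, coeff_X_mul]

theorem coeff_aHC_eq_zero_of_lt : ∀ {n k : ℕ}, n < k → (aHC n).coeff k = 0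
  | 0, k, h => by rw [aHC, coeff_one, if_neg (by omega)]
  | 1, k, h => by rw [aHC, coeff_X, if_neg (by omega)]
  | n + 2, 0, h => absurd h (by omega)
  | n + 2, k + 1, h => by
    rw [coeff_aHC_add_two_succ, coeff_aHC_eq_zero_of_lt (by omega : n + 1 < k),
      coeff_aHC_eq_zero_of_lt (by omega : n < k + 1), mul_zero, sub_zero]

theorem coeff_aHC_self : ∀ n : ℕ, (aHC n).coeff n = 1
  | 0 => by simp [aHC]
  | 1 => by simp [aHC]
  | n + 2 => by
    rw [coeff_aHC_add_two_succ, coeff_aHC_self (n + 1),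
      coeff_aHC_eq_zero_of_lt (by omega : n < n + 1 + 1), mul_zero, sub_zero]

theorem natDegree_C_add_X_mul_le (r : ℝ) (p : ℝ[X]) :
    ((C r + X) * p).natDegree ≤ p.natDegree + 1 := by
  refine natDegree_mul_le.trans ?_
  rw [add_comm (C r), natDegree_X_add_C, add_comm]

theorem natDegree_coeff_aHC_le : ∀ n k : ℕ, ((aHC n).coeff k).natDegree ≤ (n - k) / 2
  | 0, k => by rw [aHC, coeff_one]; split_ifs <;> simp
  | 1, k => by rw [aHC, coeff_X]; split_ifs <;> simp
  | n + 2, 0 => by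
    rw [coeff_aHC_add_two_zero, natDegree_neg]
    have := natDegree_coeff_aHC_le n 0
    exact (natDegree_C_add_X_mul_le _ _).trans (by omega)
  | n + 2, k + 1 => by
    rw [coeff_aHC_add_two_succ]
    refine (natDegree_sub_le _ _).trans (max_le ?_ ?_)
    · exact (natDegree_coeff_aHC_le (n + 1) k).trans (by omega)
    · rcases lt_or_ge n (k + 1) with hk | hk
      · simp [coeff_aHC_eq_zero_of_lt hk]
      · have := natDegree_coeff_aHC_le n (k + 1)
        exact (natDegree_C_add_X_mul_le _ _).trans (by omega)

noncomputable def signedCoeffAHC (k j : ℕ) : ℝ[X] := (-1) ^ j * (aHC (k + 2 * j)).coeff k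

theorem signedCoeffAHC_zero_right (k : ℕ) : signedCoeffAHC k 0 = 1 := by
  simp [signedCoeffAHC, coeff_aHC_self]

theorem signedCoeffAHC_zero_succ (j : ℕ) :
    signedCoeffAHC 0 (j + 1) = (C ((2 * j : ℕ) : ℝ) + X) * signedCoeffAHC 0 j := by
  rw [signedCoeffAHC, signedCoeffAHC, show 0 + 2 * (j + 1) = 2 * j + 2 by ring,
    coeff_aHC_add_two_zero, zero_add]
  ring

theorem signedCoeffAHC_succ_succ (k j : ℕ) :
    signedCoeffAHC (k + 1) (j + 1) =
      signedCoeffAHC k (j + 1) +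
        (C ((k + 1 + 2 * j : ℕ) : ℝ) + X) * signedCoeffAHC (k + 1) j := by
  rw [signedCoeffAHC, signedCoeffAHC, signedCoeffAHC,
    show k + 1 + 2 * (j + 1) = k + 1 + 2 * j + 2 by ring, coeff_aHC_add_two_succ,
    show k + 1 + 2 * j + 1 = k + 2 * (j + 1) by ring]
  ring

theorem signedCoeffAHC_mem_nonnegCoeffs : ∀ k j : ℕ, signedCoeffAHC k j ∈ nonnegCoeffs ℝ
  | k, 0 => by rw [signedCoeffAHC_zero_right]; exact one_mem _
  | 0, j + 1 => by
    rw [signedCoeffAHC_zero_succ]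
    exact mul_mem (C_add_X_mem_nonnegCoeffs (Nat.cast_nonneg _))
      (signedCoeffAHC_mem_nonnegCoeffs 0 j)
  | k + 1, j + 1 => by
    rw [signedCoeffAHC_succ_succ]
    exact add_mem (signedCoeffAHC_mem_nonnegCoeffs k (j + 1))
      (mul_mem (C_add_X_mem_nonnegCoeffs (Nat.cast_nonneg _))
        (signedCoeffAHC_mem_nonnegCoeffs (k + 1) j))

/-- The coefficient of `x^k` in `H_n(x;c)` is a polynomial in `c` of degree at most
`⌊(n−k)/2⌋`, and the coefficient of `x^{n−2j}` in `(−1)^j H_n(x;c)` has nonnegative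
leading coefficient as a polynomial in `c`. -/
theorem assocHermite_coeff_in_c (n : ℕ) :
    (∀ k : ℕ, ((aHC n).coeff k).natDegree ≤ (n - k) / 2) ∧
    (∀ j : ℕ, 2 * j ≤ n →
      0 ≤ (((-1 : Polynomial (Polynomial ℝ)) ^ j * aHC n).coeff (n - 2 * j)).leadingCoeff) := by
  refine ⟨natDegree_coeff_aHC_le n, fun j hj => ?_⟩
  obtain ⟨k, rfl⟩ : ∃ k, n = k + 2 * j := ⟨n - 2 * j, by omega⟩
  have hcoeff : ((-1 : ℝ[X][X]) ^ j * aHC (k + 2 * j)).coeff (k + 2 * j - 2 * j) =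
      signedCoeffAHC k j := by
    rw [Nat.add_sub_cancel, show (-1 : ℝ[X][X]) ^ j = C ((-1) ^ j) by simp, coeff_C_mul,
      signedCoeffAHC]
  rw [hcoeff]
  exact leadingCoeff_nonneg_of_mem_nonnegCoeffs (signedCoeffAHC_mem_nonnegCoeffs k j)
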